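/- arXiv:1701.06334 — 2 statements merged into one kernel-verified Lean document; each statement's English description precedes it below -/
import Mathlib

section
/- The secular function of the equilateral star graph Laplacian with Robin parameters h = (h_1,...,h_N) satisfies the identity D_h(z) = −N·z^N·sin z·(cos z)^{N−1} + ∑_{k=1}^{N} s_k(h)·(k − N·sin² z)·z^{N−k}·(sin z)^{k−1}·(cos z)^{N−k−1}, valid for all complex z (interpreting the k = N term as N·s_N(h)·(sin z)^{N−1}·cos z). -/
open Finset

noncomputable def alphaF (h z : ℂ) : ℂ := z * Complex.cos z + h * Complex.sin z

noncomputable def betaF (h z : ℂ) : ℂ := -z * Complex.sin z + h * Complex.cos z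

/-- The secular function of the equilateral star graph with Robin parameters `h`. -/
noncomputable def Dsec {N : ℕ} (h : Fin N → ℂ) (z : ℂ) : ℂ :=
  ∑ i : Fin N, betaF (h i) z * ∏ j ∈ Finset.univ.erase i, alphaF (h j) z

/-- The `m`-th elementary symmetric polynomial of the values of `c` on `s`. -/
noncomputable def esym {ι : Type*} (s : Finset ι) (m : ℕ) (c : ι → ℂ) : ℂ :=
  ∑ t ∈ s.powersetCard m, ∏ i ∈ t, c i

lemma reindexB {N : ℕ} (φ : Finset (Fin N) → ℂ) :
    ∑ t ∈ (univ : Finset (Fin N)).powerset, ∑ i ∈ tᶜ, φ (insert i t)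
      = ∑ u ∈ (univ : Finset (Fin N)).powerset, ∑ i ∈ u, φ u := by
  rw [← Finset.sum_sigma ((univ : Finset (Fin N)).powerset) (fun t => tᶜ)
      (fun x => φ (insert x.2 x.1)),
    ← Finset.sum_sigma ((univ : Finset (Fin N)).powerset) (fun u => u)
      (fun x => φ x.1)]
  refine Finset.sum_nbij' (fun x => ⟨insert x.2 x.1, x.2⟩) (fun x => ⟨x.1.erase x.2, x.2⟩)
    ?_ ?_ ?_ ?_ ?_
  · rintro ⟨t, i⟩ hx
    simp only [Finset.mem_sigma, Finset.mem_powerset, Finset.mem_compl] at hx ⊢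
    exact ⟨Finset.subset_univ _, Finset.mem_insert_self _ _⟩
  · rintro ⟨u, i⟩ hx
    simp only [Finset.mem_sigma, Finset.mem_powerset, Finset.mem_compl] at hx ⊢
    exact ⟨Finset.subset_univ _, Finset.notMem_erase _ _⟩
  · rintro ⟨t, i⟩ hx
    simp only [Finset.mem_sigma, Finset.mem_powerset, Finset.mem_compl] at hx
    simp [Finset.erase_insert hx.2]
  · rintro ⟨u, i⟩ hx
    simp only [Finset.mem_sigma, Finset.mem_powerset] at hx
    simp [Finset.insert_erase hx.2]
  · rintro ⟨t, i⟩ hx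
    rfl

/-- `D_h(z) = −N·z^N·sin z·(cos z)^{N−1}
      + ∑_{k=1}^{N−1} s_k(h)·(k − N·sin² z)·z^{N−k}·(sin z)^{k−1}·(cos z)^{N−k−1}
      + N·s_N(h)·(sin z)^{N−1}·cos z`. -/
theorem stmt_10 (N : ℕ) (hN : 2 ≤ N) (h : Fin N → ℂ) (z : ℂ) :
    Dsec h z =
      -(N : ℂ) * z ^ N * Complex.sin z * (Complex.cos z) ^ (N - 1) +
      (∑ k ∈ Finset.Icc 1 (N - 1), esym Finset.univ k h *
        ((k : ℂ) - (N : ℂ) * (Complex.sin z) ^ 2) * z ^ (N - k) *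
        (Complex.sin z) ^ (k - 1) * (Complex.cos z) ^ (N - k - 1)) +
      (N : ℂ) * esym Finset.univ N h * (Complex.sin z) ^ (N - 1) * Complex.cos z := by
  set s := Complex.sin z with hs
  set c := Complex.cos z with hc
  -- coefficient functions
  set C : Finset (Fin N) → ℂ :=
    fun t => (∏ j ∈ t, h j) * s ^ t.card * (z * c) ^ (N - 1 - t.card) with hC
  set φ : Finset (Fin N) → ℂ :=
    fun u => c * (∏ j ∈ u, h j) * s ^ (u.card - 1) * (z * c) ^ (N - u.card) with hφ
  -- Step 1 : expand the product
  have hprod : ∀ i : Fin N, ∏ j ∈ Finset.univ.erase i, alphaF (h j) z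
      = ∑ t ∈ (Finset.univ.erase i).powerset, C t := by
    intro i
    have : ∀ j : Fin N, alphaF (h j) z = h j * s + z * c := by
      intro j; rw [alphaF]; ring
    rw [Finset.prod_congr rfl (fun j _ => this j), Finset.prod_add]
    refine Finset.sum_congr rfl fun t ht => ?_
    rw [Finset.mem_powerset] at ht
    have hcard : (Finset.univ.erase i \ t).card = N - 1 - t.card := by
      rw [Finset.card_sdiff_of_subset ht, Finset.card_erase_of_mem (Finset.mem_univ i),
        Finset.card_univ, Fintype.card_fin]
    rw [Finset.prod_mul_distrib, Finset.prod_const, Finset.prod_const, hcard, hC]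
  -- Step 2 : Dsec as a double sum over (t, i) with i ∉ t
  have hD : Dsec h z = ∑ t ∈ (univ : Finset (Fin N)).powerset,
      ∑ i ∈ tᶜ, betaF (h i) z * C t := by
    rw [Dsec]
    have hpe : ∀ i : Fin N, (Finset.univ.erase i).powerset
        = (univ : Finset (Fin N)).powerset.filter (fun t => i ∉ t) := by
      intro i
      ext t
      simp [Finset.subset_erase]
    calc ∑ i : Fin N, betaF (h i) z * ∏ j ∈ Finset.univ.erase i, alphaF (h j) z
        = ∑ i : Fin N, ∑ t ∈ (univ : Finset (Fin N)).powerset.filter (fun t => i ∉ t),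
            betaF (h i) z * C t := by
          refine Finset.sum_congr rfl fun i _ => ?_
          rw [hprod i, Finset.mul_sum, hpe i]
      _ = ∑ i : Fin N, ∑ t ∈ (univ : Finset (Fin N)).powerset,
            if i ∉ t then betaF (h i) z * C t else 0 := by
          refine Finset.sum_congr rfl fun i _ => ?_
          rw [Finset.sum_filter]
      _ = ∑ t ∈ (univ : Finset (Fin N)).powerset, ∑ i ∈ tᶜ, betaF (h i) z * C t := by
          rw [Finset.sum_comm]
          refine Finset.sum_congr rfl fun t _ => ?_
          rw [← Finset.sum_filter]
          congr 1
          ext i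
          simp
  -- Step 3 : split betaF and reindex the h-part
  have hsplit : ∀ t ∈ (univ : Finset (Fin N)).powerset,
      ∑ i ∈ tᶜ, betaF (h i) z * C t
        = ((N - t.card : ℕ) : ℂ) * (-z * s) * C t + ∑ i ∈ tᶜ, φ (insert i t) := by
    intro t ht
    rw [Finset.mem_powerset] at ht
    have h1 : ∀ i ∈ tᶜ, betaF (h i) z * C t = (-z * s) * C t + φ (insert i t) := by
      intro i hi
      rw [Finset.mem_compl] at hi
      have hins : (insert i t).card = t.card + 1 := Finset.card_insert_of_notMem hi
      have hpr : ∏ j ∈ insert i t, h j = h i * ∏ j ∈ t, h j := Finset.prod_insert hi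
      rw [betaF, hφ, hC]
      simp only [hins, hpr]
      have : t.card + 1 - 1 = t.card := by omega
      rw [this]
      have htc : t.card ≤ N - 1 := by
        have hsub : t ⊆ Finset.univ.erase i := Finset.subset_erase.mpr ⟨ht, hi⟩
        have := Finset.card_le_card hsub
        rw [Finset.card_erase_of_mem (Finset.mem_univ i), Finset.card_univ,
          Fintype.card_fin] at this
        exact this
      have : N - (t.card + 1) = N - 1 - t.card := by omega
      rw [this]
      ring
    rw [Finset.sum_congr rfl h1, Finset.sum_add_distrib, Finset.sum_const,
      Finset.card_compl, Fintype.card_fin, nsmul_eq_mul]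
    ring
  -- Step 4 : single sum over powerset
  have hD2 : Dsec h z = ∑ t ∈ (univ : Finset (Fin N)).powerset,
      (((N - t.card : ℕ) : ℂ) * (-z * s) * C t + (t.card : ℂ) * φ t) := by
    rw [hD, Finset.sum_congr rfl hsplit, Finset.sum_add_distrib, reindexB φ]
    rw [← Finset.sum_add_distrib]
    refine Finset.sum_congr rfl fun t _ => ?_
    rw [Finset.sum_const, nsmul_eq_mul]
  -- Step 5 : group by cardinality
  have hcards : (univ : Finset (Fin N)).card = N := by
    rw [Finset.card_univ, Fintype.card_fin]
  set w : ℕ → ℂ := fun k =>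
    ((N - k : ℕ) : ℂ) * (-z * s) * (s ^ k * (z * c) ^ (N - 1 - k))
      + (k : ℂ) * (c * s ^ (k - 1) * (z * c) ^ (N - k)) with hw
  have hD3 : Dsec h z = ∑ k ∈ Finset.range (N + 1), w k * esym Finset.univ k h := by
    rw [hD2, Finset.sum_powerset]
    rw [hcards]
    refine Finset.sum_congr rfl fun k hk => ?_
    rw [esym, Finset.mul_sum]
    refine Finset.sum_congr rfl fun t ht => ?_
    rw [Finset.mem_powersetCard] at ht
    simp only [hC, hφ, hw, ht.2]
    ring
  rw [hD3]
  -- Step 6 : split the range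
  have hrange : Finset.range (N + 1) = insert 0 (insert N (Finset.Icc 1 (N - 1))) := by
    ext k
    simp only [Finset.mem_range, Finset.mem_insert, Finset.mem_Icc]
    omega
  rw [hrange, Finset.sum_insert (by simp; omega), Finset.sum_insert (by simp; omega)]
  have he0 : esym (Finset.univ : Finset (Fin N)) 0 h = 1 := by
    simp [esym]
  have hw0 : w 0 * esym Finset.univ 0 h = -(N : ℂ) * z ^ N * s * c ^ (N - 1) := by
    rw [he0, hw]
    simp only [Nat.sub_zero, pow_zero, Nat.cast_zero]
    have : z * (z * c) ^ (N - 1) = z ^ N * c ^ (N - 1) := by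
      rw [mul_pow, ← mul_assoc, ← pow_succ']
      congr 2
      omega
    rw [mul_one]
    calc ((N : ℕ) : ℂ) * (-z * s) * (1 * (z * c) ^ (N - 1 - 0)) + 0 * (c * s ^ (0-1) * (z*c)^(N-0))
        = -(N:ℂ) * s * (z * (z*c)^(N-1)) := by norm_num; ring
      _ = -(N : ℂ) * z ^ N * s * c ^ (N - 1) := by rw [this]; ring
  have hwN : w N * esym Finset.univ N h
      = (N : ℂ) * esym Finset.univ N h * s ^ (N - 1) * c := by
    rw [hw]
    simp only [Nat.sub_self, Nat.cast_zero, pow_zero]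
    ring
  have hmid : ∀ k ∈ Finset.Icc 1 (N - 1), w k * esym Finset.univ k h
      = esym Finset.univ k h * ((k : ℂ) - (N : ℂ) * s ^ 2) * z ^ (N - k) * s ^ (k - 1)
          * c ^ (N - k - 1) := by
    intro k hk
    rw [Finset.mem_Icc] at hk
    obtain ⟨hk1, hk2⟩ := hk
    obtain ⟨a, ha⟩ : ∃ a, N - 1 - k = a := ⟨_, rfl⟩
    obtain ⟨b, hb⟩ : ∃ b, k - 1 = b := ⟨_, rfl⟩
    have hNk : N - k = a + 1 := by omega
    have hNk1 : N - k - 1 = a := by omega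
    have hkb : k = b + 1 := by omega
    have hcast : ((N - k : ℕ) : ℂ) = (N : ℂ) - (k : ℂ) := by
      rw [Nat.cast_sub (by omega)]
    simp only [hw]
    rw [hNk1, hcast, hNk, ha, hb, hkb]
    push_cast
    have hsc : s ^ 2 + c ^ 2 = 1 := Complex.sin_sq_add_cos_sq z
    rw [mul_pow, mul_pow]
    linear_combination (esym Finset.univ (b+1) h * ((b:ℂ)+1) * z ^ (a+1) * s ^ b * c ^ a) * hsc
  rw [Finset.sum_congr rfl hmid, hw0, hwN]
  ring
end

section
/- Let the Robin parameters satisfy: h_{2j} = conj(h_{2j−1}) for 1 ≤ j ≤ m and h_j real for 2m+1 ≤ j ≤ N. Let P be the operator on L²((0,1), ℂ^N) permuting components 2j−1 and 2j for each j ≤ m, and T pointwise complex conjugation. Then P∘T maps the domain of the star-graph Laplacian L_h (functions u in W²₂ satisfying u_1(1)=...=u_N(1), ∑ u_i'(1)=0, and u_j'(0)=h_j·u_j(0)) into itself, and (P∘T)∘L_h = L_h∘(P∘T) on this domain. -/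
open Finset

lemma deriv_conj' (f : ℝ → ℂ) (hf : Differentiable ℝ f) :
    deriv (fun x => (starRingEnd ℂ) (f x)) = fun x => (starRingEnd ℂ) (deriv f x) := by
  funext x
  exact ((hf x).hasDerivAt.star).deriv

/-- The domain of the star-graph Laplacian `L_h`: componentwise `W²₂`-regular
(functions of class `C²` here), continuity and Kirchhoff conditions at the
central vertex `x = 1`, and Robin conditions `u_j'(0) = h_j u_j(0)` at `x = 0`. -/
def InDom (N : ℕ) (h : Fin N → ℂ) (u : Fin N → ℝ → ℂ) : Prop :=
  (∀ i, ContDiff ℝ 2 (u i)) ∧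
  (∀ i j : Fin N, u i 1 = u j 1) ∧
  (∑ i : Fin N, deriv (u i) 1 = 0) ∧
  (∀ i, deriv (u i) 0 = h i * u i 0)

/-- The operator `P∘T`: permute components by `σ` and conjugate pointwise. -/
noncomputable def PT {N : ℕ} (σ : Equiv.Perm (Fin N)) (u : Fin N → ℝ → ℂ) :
    Fin N → ℝ → ℂ :=
  fun i x => (starRingEnd ℂ) (u (σ i) x)

/-- The (negative) second-derivative operator acting componentwise. -/
noncomputable def Lap {N : ℕ} (u : Fin N → ℝ → ℂ) : Fin N → ℝ → ℂ :=
  fun i x => -(deriv (deriv (u i)) x)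

/-- If the Robin parameters come in conjugate pairs `h_{2j} = conj h_{2j-1}`
(`1 ≤ j ≤ m`), all remaining ones being real, and `P` is the permutation
swapping the components of each pair, then `P∘T` maps the domain of `L_h` into
itself and commutes with `L_h` on the domain. -/
theorem stmt_15 (N m : ℕ) (hm : 2 * m ≤ N) (h : Fin N → ℂ)
    (σ : Equiv.Perm (Fin N))
    (hσ : ∀ i : Fin N, ((σ i : Fin N) : ℕ) =
      if (i : ℕ) < 2 * m then (if (i : ℕ) % 2 = 0 then (i : ℕ) + 1 else (i : ℕ) - 1)
      else (i : ℕ))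
    (hh : ∀ i : Fin N, h (σ i) = (starRingEnd ℂ) (h i)) :
    ∀ u : Fin N → ℝ → ℂ, InDom N h u →
      InDom N h (PT σ u) ∧ Lap (PT σ u) = PT σ (Lap u) := by
  intro u ⟨hC, hcont, hkir, hrob⟩
  have hd : ∀ i, Differentiable ℝ (u i) := fun i => (hC i).differentiable (by norm_num)
  have hd' : ∀ i, Differentiable ℝ (deriv (u i)) := fun i =>
    ((hC i).iterate_deriv' 1 1).differentiable (by norm_num)
  have key : ∀ i, deriv (PT σ u i) = fun x => (starRingEnd ℂ) (deriv (u (σ i)) x) := by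
    intro i; exact deriv_conj' _ (hd _)
  refine ⟨⟨fun i => Complex.conjCLE.contDiff.comp (hC (σ i)), ?_, ?_, ?_⟩, ?_⟩
  · intro i j; simp [PT, hcont (σ i) (σ j)]
  · simp only [key]
    rw [← map_sum, Equiv.sum_comp σ (fun i => deriv (u i) 1), hkir, map_zero]
  · intro i
    rw [key i]
    simp only [PT, hrob (σ i), map_mul, hh i, Complex.conj_conj]
  · funext i x
    simp only [Lap, PT, key i, deriv_conj' _ (hd' (σ i)), map_neg]
end
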